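/- arXiv:0706.4344 — 6 statements merged into one kernel-verified Lean document; each statement's English description precedes it below -/
import Mathlib

section
/- Let G be a directed graph on k vertices v_1,...,v_k with adjacency matrix A(G) = (a_{ij}) over F_2, where a_{ij} = 1 iff there is an edge from v_i to v_j (i ≠ j) and a_{ii} = 0. Let d_i = Σ_j a_{ij} mod 2 and let L(G) = diag(d_1,...,d_k) + A(G) be the Laplace matrix over F_2. If r = rank_{F_2} L(G), then the number of even partitions of G equals 2^{k-r}. In particular, G is odd (its only even partitions are the trivial ones (V,∅) and (∅,V)) if and only if r = k-1. -/
/-!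
Identify `S` with its indicator vector `x ∈ 𝔽₂ᵏ`. Then
`(L x)_v = d_v x_v + ∑_j a_{vj} x_j = ∑_j a_{vj} (x_v + x_j)`, and `x_v + x_j = 1` exactly when
`v` and `j` lie on opposite sides, so `(L x)_v` is the parity of the number of out-neighbours of
`v` on the other side. Hence the even partitions correspond to the kernel of `L`, which has
`2 ^ (k - r)` elements by rank–nullity. The two trivial partitions are always even, so they are
the only ones exactly when this count is `2 ^ min 1 k`, i.e. when `r = k - 1`.
-/

open Classical Finset Matrix

variable {ι : Type*}

def IsEvenPartition (Adj : ι → ι → Prop) (S : Finset ι) : Prop :=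
  (∀ v ∈ S, Even (Nat.card {w : ι // w ∉ S ∧ Adj v w})) ∧
    ∀ v ∉ S, Even (Nat.card {w : ι // w ∈ S ∧ Adj v w})

lemma isEvenPartition_iff_forall_even (Adj : ι → ι → Prop) (S : Finset ι) :
    IsEvenPartition Adj S ↔ ∀ v, Even (Nat.card {w : ι // (w ∈ S ↔ v ∉ S) ∧ Adj v w}) := by
  refine ⟨fun ⟨hS, hSc⟩ v => ?_, fun h => ⟨fun v hv => ?_, fun v hv => ?_⟩⟩
  · by_cases hv : v ∈ S
    · simpa [hv] using hS v hv
    · simpa [hv] using hSc v hv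
  · simpa [hv] using h v
  · simpa [hv] using h v

lemma isEvenPartition_empty (Adj : ι → ι → Prop) : IsEvenPartition Adj ∅ := by
  simp [IsEvenPartition]

lemma isEvenPartition_univ [Fintype ι] (Adj : ι → ι → Prop) : IsEvenPartition Adj univ := by
  simp [IsEvenPartition]

lemma even_natCard_subtype_iff_sum_eq_zero [Fintype ι] (p : ι → Prop) [DecidablePred p] :
    Even (Nat.card {w // p w}) ↔ ∑ w, (if p w then 1 else 0 : ZMod 2) = 0 := by
  rw [sum_boole, Nat.card_eq_fintype_card, Fintype.card_subtype, ZMod.natCast_eq_zero_iff_even]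

noncomputable def finsetEquivZModTwoFun [Fintype ι] : Finset ι ≃ (ι → ZMod 2) where
  toFun S j := if j ∈ S then 1 else 0
  invFun x := {j | x j ≠ 0}
  left_inv S := by ext j; by_cases h : j ∈ S <;> simp [h]
  right_inv x := by
    funext j
    simp only [mem_filter, mem_univ, true_and]
    generalize x j = a
    fin_cases a <;> rfl

lemma diagonal_rowSum_add_mulVec_apply [Fintype ι] [DecidableEq ι] {R : Type*} [CommSemiring R]
    (A : Matrix ι ι R) (x : ι → R) (v : ι) :
    (((diagonal fun i => ∑ j, A i j) + A) *ᵥ x) v = ∑ j, A v j * (x v + x j) := by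
  rw [add_mulVec, Pi.add_apply, mulVec_diagonal, sum_mul]
  simp only [mulVec, dotProduct, mul_add, sum_add_distrib]

lemma Matrix.natCard_ker_mulVecLin {m n K : Type*} [Fintype n] [Field K] [Fintype K]
    (M : Matrix m n K) :
    Nat.card (LinearMap.ker M.mulVecLin) = Fintype.card K ^ (Fintype.card n - M.rank) := by
  have hrank := LinearMap.finrank_range_add_finrank_ker M.mulVecLin
  rw [Module.finrank_fintype_fun_eq_card, ← Matrix.rank] at hrank
  have : Fintype (LinearMap.ker M.mulVecLin) := Fintype.ofFinite _
  rw [Nat.card_eq_fintype_card, Module.card_eq_pow_finrank (K := K)]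
  congr 1
  omega

section Laplacian

variable [Fintype ι] [DecidableEq ι] {Adj : ι → ι → Prop} {A : Matrix ι ι (ZMod 2)}

lemma laplacian_mulVec_finsetEquivZModTwoFun_apply
    (hA : ∀ i j, A i j = if Adj i j then 1 else 0) (S : Finset ι) (v : ι) :
    (((diagonal fun i => ∑ j, A i j) + A) *ᵥ finsetEquivZModTwoFun S) v =
      ∑ w, if (w ∈ S ↔ v ∉ S) ∧ Adj v w then 1 else 0 := by
  rw [diagonal_rowSum_add_mulVec_apply]
  refine sum_congr rfl fun w _ => ?_
  by_cases hv : v ∈ S <;> by_cases hw : w ∈ S <;> by_cases hvw : Adj v w <;>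
    simp [finsetEquivZModTwoFun, hA, hv, hw, hvw, CharTwo.add_self_eq_zero]

lemma isEvenPartition_iff_laplacian_mulVec_eq_zero
    (hA : ∀ i j, A i j = if Adj i j then 1 else 0) (S : Finset ι) :
    IsEvenPartition Adj S ↔
      ((diagonal fun i => ∑ j, A i j) + A) *ᵥ finsetEquivZModTwoFun S = 0 := by
  simp only [isEvenPartition_iff_forall_even, even_natCard_subtype_iff_sum_eq_zero, funext_iff,
    laplacian_mulVec_finsetEquivZModTwoFun_apply hA, Pi.zero_apply]

lemma natCard_isEvenPartition (hA : ∀ i j, A i j = if Adj i j then 1 else 0) :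
    Nat.card {S // IsEvenPartition Adj S} =
      2 ^ (Fintype.card ι - ((diagonal fun i => ∑ j, A i j) + A).rank) := by
  calc Nat.card {S // IsEvenPartition Adj S}
      _ = Nat.card (LinearMap.ker ((diagonal fun i => ∑ j, A i j) + A).mulVecLin) :=
        Nat.card_congr <| (finsetEquivZModTwoFun.subtypeEquiv
          (isEvenPartition_iff_laplacian_mulVec_eq_zero hA)).trans
          (Equiv.subtypeEquivRight fun _ => LinearMap.mem_ker.symm)
      _ = _ := by rw [Matrix.natCard_ker_mulVecLin, ZMod.card]

end Laplacian

lemma forall_eq_empty_or_eq_univ_iff_natCard_eq [Fintype ι] {P : Finset ι → Prop}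
    (hempty : P ∅) (huniv : P univ) :
    (∀ S, P S → S = ∅ ∨ S = univ) ↔ Nat.card {S // P S} = #({∅, univ} : Finset (Finset ι)) := by
  have hsub : ({∅, univ} : Finset (Finset ι)) ⊆ univ.filter P := by
    simp [insert_subset_iff, hempty, huniv]
  have htrivial : (∀ S, P S → S = ∅ ∨ S = univ) ↔ univ.filter P ⊆ {∅, univ} := by
    simp [subset_iff]
  rw [htrivial, Nat.card_eq_fintype_card, Fintype.card_subtype]
  exact ⟨fun h => congrArg card (Subset.antisymm h hsub),
    fun h => (eq_of_subset_of_card_le hsub h.le).ge⟩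

-- For empty `ι` the two trivial partitions coincide.
lemma card_pair_empty_univ [Fintype ι] :
    #({∅, univ} : Finset (Finset ι)) = 2 ^ min 1 (Fintype.card ι) := by
  rcases isEmpty_or_nonempty ι with hι | hι
  · simp [univ_eq_empty]
  · rw [card_pair univ_nonempty.ne_empty.symm, min_eq_left Fintype.card_pos, pow_one]

theorem even_partitions_card_eq_two_pow_general (k : ℕ) (Adj : Fin k → Fin k → Prop)
    (A : Matrix (Fin k) (Fin k) (ZMod 2))
    (hA : ∀ i j, A i j = if Adj i j then 1 else 0)
    (L : Matrix (Fin k) (Fin k) (ZMod 2))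
    (hL : L = Matrix.diagonal (fun i => ∑ j, A i j) + A)
    (r : ℕ) (hr : r = L.rank) :
    Nat.card {S : Finset (Fin k) //
      (∀ v ∈ S, Even (Nat.card {w : Fin k // w ∉ S ∧ Adj v w})) ∧
      (∀ v ∉ S, Even (Nat.card {w : Fin k // w ∈ S ∧ Adj v w}))} = 2 ^ (k - r) ∧
    ((∀ S : Finset (Fin k),
        ((∀ v ∈ S, Even (Nat.card {w : Fin k // w ∉ S ∧ Adj v w})) ∧
         (∀ v ∉ S, Even (Nat.card {w : Fin k // w ∈ S ∧ Adj v w}))) →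
        S = ∅ ∨ S = Finset.univ) ↔ r = k - 1) := by
  have hcard : Nat.card {S // IsEvenPartition Adj S} = 2 ^ (k - r) := by
    rw [natCard_isEvenPartition hA, Fintype.card_fin, hr, hL]
  have hrk : r ≤ k := by simpa [hr] using L.rank_le_card_width
  refine ⟨hcard, (forall_eq_empty_or_eq_univ_iff_natCard_eq (isEvenPartition_empty Adj)
    (isEvenPartition_univ Adj)).trans ?_⟩
  rw [hcard, card_pair_empty_univ, Fintype.card_fin, (Nat.pow_right_injective le_rfl).eq_iff]
  omega

/-- The number of even partitions of a directed graph G on k vertices equals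
2^(k - r) where r is the F_2-rank of the Laplace matrix L(G); in particular G is odd
iff r = k - 1. Partitions (S, T) are encoded by the set S, with T the complement. -/
theorem even_partitions_card_eq_two_pow (k : ℕ) (Adj : Fin k → Fin k → Prop)
    (hirr : ∀ v, ¬ Adj v v)
    (A : Matrix (Fin k) (Fin k) (ZMod 2))
    (hA : ∀ i j, A i j = if Adj i j then 1 else 0)
    (L : Matrix (Fin k) (Fin k) (ZMod 2))
    (hL : L = Matrix.diagonal (fun i => ∑ j, A i j) + A)
    (r : ℕ) (hr : r = L.rank) :
    Nat.card {S : Finset (Fin k) //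
      (∀ v ∈ S, Even (Nat.card {w : Fin k // w ∉ S ∧ Adj v w})) ∧
      (∀ v ∉ S, Even (Nat.card {w : Fin k // w ∈ S ∧ Adj v w}))} = 2 ^ (k - r) ∧
    ((∀ S : Finset (Fin k),
        ((∀ v ∈ S, Even (Nat.card {w : Fin k // w ∉ S ∧ Adj v w})) ∧
         (∀ v ∉ S, Even (Nat.card {w : Fin k // w ∈ S ∧ Adj v w}))) →
        S = ∅ ∨ S = Finset.univ) ↔ r = k - 1) :=
  even_partitions_card_eq_two_pow_general k Adj A hA L hL r hr
end

section
/- The map sending a partition (S,T) of the vertex set {v_1,...,v_k} of a directed graph G to the indicator vector x ∈ F_2^k with x_i = 1 iff v_i ∈ S is a bijection between even partitions of G and the kernel of the Laplace matrix L(G) over F_2. -/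
open Classical Finset

lemma key_entry (k : ℕ) (Adj : Fin k → Fin k → Prop)
    (A : Matrix (Fin k) (Fin k) (ZMod 2))
    (hA : ∀ i j, A i j = if Adj i j then 1 else 0)
    (S : Finset (Fin k)) (v : Fin k) :
    (Matrix.diagonal (fun i => ∑ j, A i j) + A).mulVec
      (fun i => if i ∈ S then (1 : ZMod 2) else 0) v =
    if v ∈ S then ((univ.filter fun w => w ∉ S ∧ Adj v w).card : ZMod 2)
    else ((univ.filter fun w => w ∈ S ∧ Adj v w).card : ZMod 2) := by
  classical
  have hsum : ∀ (p : Fin k → Prop) [DecidablePred p],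
      (∑ j, if p j then (1 : ZMod 2) else 0) = ((univ.filter p).card : ZMod 2) := by
    intro p _
    simp [Finset.sum_boole]
  have h1 : (Matrix.diagonal (fun i => ∑ j, A i j) + A).mulVec
      (fun i => if i ∈ S then (1 : ZMod 2) else 0) v =
      (∑ j, A v j) * (if v ∈ S then 1 else 0) + ∑ j, A v j * (if j ∈ S then 1 else 0) := by
    simp [Matrix.add_mulVec, Matrix.mulVec, dotProduct, Matrix.diagonal_apply,
      Finset.sum_add_distrib, Finset.sum_ite_eq, mul_ite, mul_one, mul_zero]
  rw [h1]
  have hAv : (∑ j, A v j) = ((univ.filter fun w => Adj v w).card : ZMod 2) := by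
    simp only [hA]; exact hsum _
  have hAS : (∑ j, A v j * (if j ∈ S then 1 else 0)) =
      ((univ.filter fun w => w ∈ S ∧ Adj v w).card : ZMod 2) := by
    rw [← hsum (fun w => w ∈ S ∧ Adj v w)]
    apply Finset.sum_congr rfl
    intro j _
    simp [hA]
    by_cases h1 : Adj v j <;> by_cases h2 : j ∈ S <;> simp [h1, h2]
  rw [hAv, hAS]
  by_cases hv : v ∈ S
  · simp only [hv, if_pos, mul_one]
    have hcard : (univ.filter fun w => Adj v w).card =
        (univ.filter fun w => w ∈ S ∧ Adj v w).card +
        (univ.filter fun w => w ∉ S ∧ Adj v w).card := by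
      rw [← Finset.card_union_of_disjoint]
      · congr 1
        ext w
        simp only [mem_union, mem_filter, mem_univ, true_and]
        tauto
      · simp only [Finset.disjoint_left, mem_filter, mem_univ, true_and]
        tauto
    rw [hcard]
    push_cast
    ring_nf
    simp [show (2:ZMod 2) = 0 from rfl]
  · simp [hv]

/-- The indicator-vector map is a bijection between the even partitions
(S, complement of S) of a directed graph G and the kernel of its Laplace matrix over F_2. -/
theorem even_partitions_equiv_kernel (k : ℕ) (Adj : Fin k → Fin k → Prop)
    (hirr : ∀ v, ¬ Adj v v)
    (A : Matrix (Fin k) (Fin k) (ZMod 2))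
    (hA : ∀ i j, A i j = if Adj i j then 1 else 0)
    (L : Matrix (Fin k) (Fin k) (ZMod 2))
    (hL : L = Matrix.diagonal (fun i => ∑ j, A i j) + A) :
    Set.BijOn (fun (S : Finset (Fin k)) => (fun i => if i ∈ S then (1 : ZMod 2) else 0))
      {S : Finset (Fin k) |
        (∀ v ∈ S, Even (Nat.card {w : Fin k // w ∉ S ∧ Adj v w})) ∧
        (∀ v ∉ S, Even (Nat.card {w : Fin k // w ∈ S ∧ Adj v w}))}
      {x : Fin k → ZMod 2 | L.mulVec x = 0} := by
  classical
  subst hL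
  have hcard : ∀ (p : Fin k → Prop) [DecidablePred p],
      Nat.card {w : Fin k // p w} = (univ.filter p).card := by
    intro p _
    simp [Nat.card_eq_fintype_card, Fintype.card_subtype]
  have heven : ∀ n : ℕ, Even n ↔ (n : ZMod 2) = 0 := by
    intro n
    rw [ZMod.natCast_eq_zero_iff]
    exact even_iff_two_dvd
  refine ⟨?_, ?_, ?_⟩
  · -- MapsTo
    intro S hS
    simp only [Set.mem_setOf_eq] at hS ⊢
    funext v
    rw [key_entry k Adj A hA S v, Pi.zero_apply]
    by_cases hv : v ∈ S
    · rw [if_pos hv, ← heven, ← hcard]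
      exact hS.1 v hv
    · rw [if_neg hv, ← heven, ← hcard]
      exact hS.2 v hv
  · -- InjOn
    intro S _ T _ h
    ext i
    have hi := congrFun h i
    simp only at hi
    by_cases h1 : i ∈ S <;> by_cases h2 : i ∈ T <;> simp [h1, h2] at hi ⊢
  · -- SurjOn
    intro x hx
    simp only [Set.mem_setOf_eq] at hx
    have h01 : ∀ a : ZMod 2, a = 0 ∨ a = 1 := by decide
    set S : Finset (Fin k) := univ.filter (fun i => x i = 1) with hSdef
    have hind : (fun i => if i ∈ S then (1 : ZMod 2) else 0) = x := by
      funext i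
      rcases h01 (x i) with h | h <;> simp [hSdef, h]
    refine ⟨S, ?_, hind⟩
    have hkey : ∀ v, (if v ∈ S then ((univ.filter fun w => w ∉ S ∧ Adj v w).card : ZMod 2)
        else ((univ.filter fun w => w ∈ S ∧ Adj v w).card : ZMod 2)) = 0 := by
      intro v
      rw [← key_entry k Adj A hA S v, hind, hx, Pi.zero_apply]
    constructor
    · intro v hv
      rw [heven, hcard]
      have := hkey v
      rwa [if_pos hv] at this
    · intro v hv
      rw [heven, hcard]
      have := hkey v
      rwa [if_neg hv] at this
end

section
/- The probability that a uniformly random k×k symmetric matrix over F_2 has rank k equals ∏_{j=1}^{⌊(k+1)/2⌋} (1 - 2^{-(2j-1)}). -/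
/-!
Write a symmetric matrix indexed by `n ⊕ Unit` as `bordered B v a = [[B, v], [vᵀ, a]]` and
count, for each border `(v, a)`, the symmetric `B` that make it invertible. For `a ≠ 0` the
Schur complement `B - a⁻¹ v vᵀ` shows that there are as many as invertible symmetric `n × n`
matrices; for `(v, a) = (0, 0)` there are none; for `a = 0`, `v ≠ 0` a congruence
`B ↦ P B Pᵀ` moves `v` to the last basis vector, where the Schur complement of the invertible
corner `[[d, 1], [1, 0]]` is the top-left block of `B`. Over a field with `q` elements the
number `f k` of invertible symmetric `k × k` matrices therefore satisfies
`f (k + 2) = (q - 1) q^(k+1) f (k + 1) + (q^(k+1) - 1) q^(k+1) f k`, while the number of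
symmetric ones is multiplied by `q^(k+1)` from `k` to `k + 1`. For `q = 2` the ratio obeys the
two-step recursion of the product formula.
-/

open Classical Finset

namespace Matrix

variable {R n : Type*}

def bordered (B : Matrix n n R) (v : n → R) (a : R) : Matrix (n ⊕ Unit) (n ⊕ Unit) R :=
  fromBlocks B (replicateCol Unit v) (replicateRow Unit v) (of fun _ _ => a)

@[simp]
lemma isSymm_bordered_iff {B : Matrix n n R} {v : n → R} {a : R} :
    (bordered B v a).IsSymm ↔ B.IsSymm := by
  rw [bordered, isSymm_fromBlocks_iff]
  exact ⟨fun h => h.1, fun h => ⟨h, rfl, rfl, rfl⟩⟩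

lemma IsSymm.toBlocks₁₁ {A : Matrix (n ⊕ Unit) (n ⊕ Unit) R} (hA : A.IsSymm) :
    A.toBlocks₁₁.IsSymm :=
  IsSymm.ext fun _ _ => hA.apply _ _

lemma IsSymm.bordered_toBlocks₁₁ {A : Matrix (n ⊕ Unit) (n ⊕ Unit) R} (hA : A.IsSymm) :
    bordered A.toBlocks₁₁ (fun i => A (.inl i) (.inr ())) (A (.inr ()) (.inr ())) = A := by
  ext (_ | ⟨⟩) (_ | ⟨⟩)
  · rfl
  · rfl
  · exact hA.apply _ _
  · rfl

def isSymmBorderedEquiv (P : Matrix (n ⊕ Unit) (n ⊕ Unit) R → Prop) :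
    {A : Matrix (n ⊕ Unit) (n ⊕ Unit) R // A.IsSymm ∧ P A} ≃
      Σ av : R × (n → R), {B : Matrix n n R // B.IsSymm ∧ P (bordered B av.2 av.1)} where
  toFun A := ⟨(A.1 (.inr ()) (.inr ()), fun i => A.1 (.inl i) (.inr ())),
    A.1.toBlocks₁₁, A.2.1.toBlocks₁₁, A.2.1.bordered_toBlocks₁₁ ▸ A.2.2⟩
  invFun x := ⟨bordered x.2.1 x.1.2 x.1.1, isSymm_bordered_iff.2 x.2.2.1, x.2.2.2⟩
  left_inv A := Subtype.ext A.2.1.bordered_toBlocks₁₁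
  right_inv _ := rfl

lemma natCard_isSymm_and_eq_sum [Fintype R] [Fintype n] [DecidableEq n]
    (P : Matrix (n ⊕ Unit) (n ⊕ Unit) R → Prop) :
    Nat.card {A // A.IsSymm ∧ P A} =
      ∑ a : R, ∑ v : n → R, Nat.card {B : Matrix n n R // B.IsSymm ∧ P (bordered B v a)} := by
  rw [Nat.card_congr (isSymmBorderedEquiv P), Nat.card_sigma, Fintype.sum_prod_type]

section CommRing

variable [CommRing R] [Fintype n]

lemma fromBlocks_mul_bordered_mul_transpose (P B : Matrix n n R) (v : n → R) (a : R) :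
    fromBlocks P 0 0 1 * bordered B v a * (fromBlocks P 0 0 1)ᵀ =
      bordered (P * B * Pᵀ) (P *ᵥ v) a := by
  ext (i | ⟨⟩) (j | ⟨⟩) <;>
    simp [bordered, fromBlocks_transpose, fromBlocks_multiply, mul_apply, mulVec, dotProduct,
      mul_comm]

variable [DecidableEq n]

lemma isUnit_bordered_iff (B : Matrix n n R) (v : n → R) (a : R) [Invertible a] :
    IsUnit (bordered B v a) ↔ IsUnit (B - ⅟a • vecMulVec v v) := by
  let _ : Invertible (of fun _ _ => a : Matrix Unit Unit R) :=
    ⟨of fun _ _ => ⅟a, by ext; simp [mul_apply], by ext; simp [mul_apply]⟩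
  rw [bordered, isUnit_fromBlocks_iff_of_invertible₂₂]
  convert Iff.rfl using 3
  ext i j
  simp [mul_apply, vecMulVec_apply, mul_comm, mul_assoc, mul_left_comm]

lemma not_isUnit_bordered_zero_zero [Nontrivial R] (B : Matrix n n R) :
    ¬IsUnit (bordered B 0 0) := by
  rw [isUnit_iff_isUnit_det,
    det_eq_zero_of_row_eq_zero (.inr ()) (by rintro (_ | ⟨⟩) <;> rfl)]
  exact not_isUnit_zero

lemma isUnit_bordered_single_zero_iff {m : Type*} [Fintype m] [DecidableEq m]
    (B : Matrix (m ⊕ Unit) (m ⊕ Unit) R) :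
    IsUnit (bordered B (Pi.single (.inr ()) 1) 0) ↔ IsUnit B.toBlocks₁₁ := by
  let M : Matrix (Unit ⊕ Unit) (Unit ⊕ Unit) R := fromBlocks B.toBlocks₂₂ 1 1 0
  let _ : Invertible M := ⟨fromBlocks 0 1 1 (-B.toBlocks₂₂), by
    ext (_ | _) (_ | _) <;> simp [M, fromBlocks_multiply], by
    ext (_ | _) (_ | _) <;> simp [M, fromBlocks_multiply]⟩
  have hblocks : reindex (Equiv.sumAssoc m Unit Unit) (Equiv.sumAssoc m Unit Unit)
      (bordered B (Pi.single (.inr ()) 1) 0) =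
      fromBlocks B.toBlocks₁₁ (fromCols B.toBlocks₁₂ 0) (fromRows B.toBlocks₂₁ 0) M := by
    ext (_ | _ | _) (_ | _ | _) <;>
      simp [bordered, M, toBlocks₁₁, toBlocks₁₂, toBlocks₂₁, toBlocks₂₂]
  -- the Schur complement of the corner `M` is `B.toBlocks₁₁` since `(⅟M)₁₁ = 0`
  rw [← isUnit_submatrix_equiv (Equiv.sumAssoc m Unit Unit).symm
    (Equiv.sumAssoc m Unit Unit).symm, ← reindex_apply, hblocks,
    isUnit_fromBlocks_iff_of_invertible₂₂]
  convert Iff.rfl using 3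
  rw [show ⅟M = fromBlocks 0 1 1 (-B.toBlocks₂₂) from rfl]
  ext i j
  simp [mul_apply]

end CommRing

lemma exists_isUnit_mulVec_eq [Field R] [Fintype n] [DecidableEq n] {v w : n → R}
    (hv : v ≠ 0) (hw : w ≠ 0) : ∃ P : Matrix n n R, IsUnit P ∧ P *ᵥ v = w := by
  obtain ⟨g, hg⟩ := Submodule.exists_linearEquiv_restrict_eq
    ((LinearEquiv.toSpanNonzeroSingleton R _ v hv).symm ≪≫ₗ
      LinearEquiv.toSpanNonzeroSingleton R _ w hw)
  refine ⟨LinearMap.toMatrix' g.toLinearMap,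
    LinearMap.isUnit_toMatrix'_iff.2 (LinearMap.GeneralLinearGroup.ofLinearEquiv g).isUnit, ?_⟩
  have hv1 : (LinearEquiv.toSpanNonzeroSingleton R _ v hv).symm
      ⟨v, Submodule.mem_span_singleton_self v⟩ = 1 := by
    rw [LinearEquiv.symm_apply_eq, LinearEquiv.toSpanNonzeroSingleton_one]
  have hgv := hg ⟨v, Submodule.mem_span_singleton_self v⟩
  simp only [LinearEquiv.trans_apply, hv1, LinearEquiv.toSpanNonzeroSingleton_one] at hgv
  rw [LinearMap.toMatrix'_mulVec]
  exact hgv.symm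

lemma rank_eq_card_iff_isUnit [Field R] [Fintype n] [DecidableEq n] (A : Matrix n n R) :
    A.rank = Fintype.card n ↔ IsUnit A := by
  rw [← mulVec_surjective_iff_isUnit, rank, ← Module.finrank_fintype_fun_eq_card R,
    ← Submodule.eq_top_iff_finrank_eq, LinearMap.range_eq_top]
  rfl

section Counting

variable (R n) in
noncomputable def numSymm : ℕ := Nat.card {A : Matrix n n R // A.IsSymm}

variable (R n) in
noncomputable def numInvSymm [Ring R] [Fintype n] [DecidableEq n] : ℕ :=
  Nat.card {A : Matrix n n R // A.IsSymm ∧ IsUnit A}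

variable (R) in
noncomputable def numInvSymmBordered [Ring R] [Fintype n] [DecidableEq n] (v : n → R) (a : R) :
    ℕ :=
  Nat.card {B : Matrix n n R // B.IsSymm ∧ IsUnit (bordered B v a)}

lemma numSymm_congr {m : Type*} (e : m ≃ n) : numSymm R m = numSymm R n :=
  Nat.card_congr <| Equiv.subtypeEquiv (reindex e e) fun _ => (isSymm_reindex_iff e).symm

lemma numInvSymm_congr [CommRing R] [Fintype n] [DecidableEq n] {m : Type*} [Fintype m]
    [DecidableEq m] (e : m ≃ n) : numInvSymm R m = numInvSymm R n :=
  Nat.card_congr <| Equiv.subtypeEquiv (reindex e e) fun _ => by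
    rw [isSymm_reindex_iff, reindex_apply, isUnit_submatrix_equiv]

lemma numSymm_of_isEmpty [IsEmpty n] : numSymm R n = 1 :=
  Nat.card_eq_one_iff_unique.2 ⟨inferInstance, ⟨⟨of isEmptyElim, Subsingleton.elim _ _⟩⟩⟩

lemma numInvSymm_of_isEmpty [Ring R] [Fintype n] [DecidableEq n] [IsEmpty n] :
    numInvSymm R n = 1 :=
  Nat.card_eq_one_iff_unique.2 ⟨inferInstance, ⟨⟨1, isSymm_one, isUnit_one⟩⟩⟩

lemma numSymm_sum_unit [Fintype R] [Fintype n] [DecidableEq n] :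
    numSymm R (n ⊕ Unit) = Fintype.card R ^ (Fintype.card n + 1) * numSymm R n := by
  have h := natCard_isSymm_and_eq_sum (R := R) (n := n) fun _ => True
  simp only [and_true] at h
  rw [numSymm, h, numSymm]
  simp only [Nat.card_eq_fintype_card, sum_const, card_univ, Fintype.card_pi, prod_const,
    smul_eq_mul, pow_succ]
  ring

lemma numInvSymmBordered_zero_zero [CommRing R] [Nontrivial R] [Fintype n] [DecidableEq n] :
    numInvSymmBordered R (0 : n → R) 0 = 0 :=
  Nat.card_eq_zero.2 <| .inl ⟨fun B => not_isUnit_bordered_zero_zero B.1 B.2.2⟩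

lemma isSymm_mul_mul_transpose_iff [CommRing R] [Fintype n] [DecidableEq n] {P : Matrix n n R}
    (hP : IsUnit P) {B : Matrix n n R} : (P * B * Pᵀ).IsSymm ↔ B.IsSymm := by
  rw [IsSymm, transpose_mul, transpose_mul, transpose_transpose, ← mul_assoc]
  exact ⟨fun h => hP.mul_left_cancel (((isUnit_transpose P).2 hP).mul_right_cancel h),
    fun h => by rw [h.eq]⟩

lemma numInvSymmBordered_mulVec [CommRing R] [Fintype n] [DecidableEq n] {P : Matrix n n R}
    (hP : IsUnit P) (v : n → R) (a : R) :
    numInvSymmBordered R (P *ᵥ v) a = numInvSymmBordered R v a := by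
  have hPt : IsUnit Pᵀ := (isUnit_transpose P).2 hP
  have hQ : IsUnit (fromBlocks P 0 0 (1 : Matrix Unit Unit R)) :=
    isUnit_fromBlocks_zero₂₁.2 ⟨hP, isUnit_one⟩
  have hQt := (isUnit_transpose _).2 hQ
  refine (Nat.card_congr <| Equiv.subtypeEquiv
    ((Units.mulLeft hP.unit).trans (Units.mulRight hPt.unit)) fun B => ?_).symm
  simp only [Equiv.trans_apply, Units.mulLeft_apply, Units.mulRight_apply, IsUnit.unit_spec,
    isSymm_mul_mul_transpose_iff hP, ← fromBlocks_mul_bordered_mul_transpose]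
  rw [← hQt.unit_spec, Units.isUnit_mul_units, ← hQ.unit_spec, Units.isUnit_units_mul]

lemma numInvSymmBordered_single_zero [CommRing R] [Fintype R] {m : Type*} [Fintype m]
    [DecidableEq m] :
    numInvSymmBordered R (Pi.single (.inr ()) 1 : m ⊕ Unit → R) 0 =
      Fintype.card R ^ (Fintype.card m + 1) * numInvSymm R m := by
  rw [numInvSymmBordered, Nat.card_congr <| Equiv.subtypeEquivRight fun B =>
      and_congr_right' (isUnit_bordered_single_zero_iff B),
    natCard_isSymm_and_eq_sum]
  simp only [bordered, toBlocks_fromBlocks₁₁, Nat.card_eq_fintype_card, sum_const, card_univ,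
    Fintype.card_pi, prod_const, smul_eq_mul, pow_succ, numInvSymm]
  ring

section Field

variable [Field R]

lemma numInvSymmBordered_of_ne_zero [Fintype n] [DecidableEq n] {a : R} (ha : a ≠ 0)
    (v : n → R) : numInvSymmBordered R v a = numInvSymm R n := by
  let _ := invertibleOfNonzero ha
  have hvv : (⅟a • vecMulVec v v).IsSymm := IsSymm.smul (transpose_vecMulVec v v) _
  refine Nat.card_congr <| Equiv.subtypeEquiv (Equiv.subRight (⅟a • vecMulVec v v)) fun B => ?_
  rw [isUnit_bordered_iff, Equiv.subRight_apply]
  exact and_congr_left' ⟨fun h => h.sub hvv, fun h => by simpa using h.add hvv⟩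

variable [Fintype R]

lemma numInvSymmBordered_zero_of_ne_zero {m : Type*} [Fintype m] [DecidableEq m]
    {v : m ⊕ Unit → R} (hv : v ≠ 0) :
    numInvSymmBordered R v 0 = Fintype.card R ^ (Fintype.card m + 1) * numInvSymm R m := by
  obtain ⟨P, hP, rfl⟩ := exists_isUnit_mulVec_eq
    (Pi.single_ne_zero_iff.2 one_ne_zero : Pi.single (.inr ()) (1 : R) ≠ 0) hv
  rw [numInvSymmBordered_mulVec hP, numInvSymmBordered_single_zero]

lemma numInvSymm_sum_unit [Fintype n] [DecidableEq n] :
    numInvSymm R (n ⊕ Unit) = (Fintype.card R - 1) * Fintype.card R ^ Fintype.card n *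
      numInvSymm R n + ∑ v : n → R, numInvSymmBordered R v 0 := by
  have h : numInvSymm R (n ⊕ Unit) = ∑ a, ∑ v, numInvSymmBordered R v a :=
    natCard_isSymm_and_eq_sum _
  rw [h, Fintype.sum_eq_add_sum_compl 0, add_comm, sum_congr rfl fun a ha =>
    sum_congr rfl fun v _ => numInvSymmBordered_of_ne_zero (by simpa using ha) v]
  simp [card_compl, mul_assoc]

lemma sum_numInvSymmBordered_zero {m : Type*} [Fintype m] [DecidableEq m] :
    ∑ v : m ⊕ Unit → R, numInvSymmBordered R v 0 =
      (Fintype.card R ^ (Fintype.card m + 1) - 1) *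
        (Fintype.card R ^ (Fintype.card m + 1) * numInvSymm R m) := by
  rw [Fintype.sum_eq_add_sum_compl 0, numInvSymmBordered_zero_zero, zero_add,
    sum_congr rfl fun v hv => numInvSymmBordered_zero_of_ne_zero (by simpa using hv)]
  simp [card_compl]

lemma numInvSymm_fin_one : numInvSymm R (Fin 1) = Fintype.card R - 1 := by
  rw [numInvSymm_congr (Fintype.equivOfCardEq (by simp) : Fin 1 ≃ Fin 0 ⊕ Unit),
    numInvSymm_sum_unit, numInvSymm_of_isEmpty, Fintype.sum_unique,
    Subsingleton.elim default 0, numInvSymmBordered_zero_zero]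
  simp

lemma numInvSymm_fin_add_two (k : ℕ) :
    numInvSymm R (Fin (k + 2)) =
      (Fintype.card R - 1) * Fintype.card R ^ (k + 1) * numInvSymm R (Fin (k + 1)) +
        (Fintype.card R ^ (k + 1) - 1) * (Fintype.card R ^ (k + 1) * numInvSymm R (Fin k)) := by
  rw [numInvSymm_congr (Fintype.equivOfCardEq (by simp) : Fin (k + 2) ≃ (Fin k ⊕ Unit) ⊕ Unit),
    numInvSymm_sum_unit, sum_numInvSymmBordered_zero,
    numInvSymm_congr (Fintype.equivOfCardEq (by simp) : Fin k ⊕ Unit ≃ Fin (k + 1))]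
  simp

end Field

lemma numSymm_fin_succ [Fintype R] (k : ℕ) :
    numSymm R (Fin (k + 1)) = Fintype.card R ^ (k + 1) * numSymm R (Fin k) := by
  rw [numSymm_congr (Fintype.equivOfCardEq (by simp) : Fin (k + 1) ≃ Fin k ⊕ Unit),
    numSymm_sum_unit, Fintype.card_fin]

end Counting

end Matrix

open Matrix

noncomputable def symmFullRankProb (k : ℕ) : ℝ :=
  ∏ j ∈ Icc 1 ((k + 1) / 2), (1 - 2⁻¹ ^ (2 * j - 1))

lemma symmFullRankProb_two_mul_add_one (t : ℕ) :
    symmFullRankProb (2 * t + 1) = symmFullRankProb (2 * t) * (1 - 2⁻¹ ^ (2 * t + 1)) := by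
  rw [symmFullRankProb, symmFullRankProb, show (2 * t + 1 + 1) / 2 = t + 1 by omega,
    show (2 * t + 1) / 2 = t by omega, prod_Icc_succ_top (by omega),
    show 2 * (t + 1) - 1 = 2 * t + 1 by omega]

lemma symmFullRankProb_two_mul_add_two (t : ℕ) :
    symmFullRankProb (2 * t + 2) = symmFullRankProb (2 * t + 1) := by
  rw [symmFullRankProb, symmFullRankProb, show (2 * t + 2 + 1) / 2 = (2 * t + 1 + 1) / 2 by omega]

lemma symmFullRankProb_add_two (k : ℕ) :
    symmFullRankProb (k + 2) =
      (symmFullRankProb (k + 1) + (1 - 2⁻¹ ^ (k + 1)) * symmFullRankProb k) / 2 := by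
  obtain ⟨t, rfl | rfl⟩ := Nat.even_or_odd' k
  · rw [symmFullRankProb_two_mul_add_two, symmFullRankProb_two_mul_add_one]
    ring
  · rw [show 2 * t + 1 + 2 = 2 * (t + 1) + 1 by ring, symmFullRankProb_two_mul_add_one,
      show 2 * (t + 1) = 2 * t + 2 by ring, symmFullRankProb_two_mul_add_two]
    ring

lemma numInvSymm_zmod_two_fin (k : ℕ) :
    (numInvSymm (ZMod 2) (Fin k) : ℝ) = symmFullRankProb k * numSymm (ZMod 2) (Fin k) := by
  induction k using Nat.twoStepInduction with
  | zero => simp [numInvSymm_of_isEmpty, numSymm_of_isEmpty, symmFullRankProb]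
  | one =>
    rw [numInvSymm_fin_one, numSymm_fin_succ, numSymm_of_isEmpty]
    norm_num [symmFullRankProb]
  | more k ih₀ ih₁ =>
    rw [numInvSymm_fin_add_two, ZMod.card, numSymm_fin_succ, symmFullRankProb_add_two]
    push_cast [Nat.one_le_two_pow]
    rw [ih₀, ih₁, numSymm_fin_succ, ZMod.card, inv_pow]
    push_cast
    field_simp
    ring

/-- The probability that a uniformly random symmetric k×k matrix over F_2
has full rank k equals ∏_{j=1}^{⌊(k+1)/2⌋} (1 - 2^{-(2j-1)}). -/
theorem prob_symmetric_full_rank (k : ℕ) :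
    ((Finset.univ.filter (fun A : Matrix (Fin k) (Fin k) (ZMod 2) =>
        A.IsSymm ∧ A.rank = k)).card : ℝ) =
    (∏ j ∈ Finset.Icc 1 ((k + 1) / 2), (1 - ((2:ℝ)⁻¹) ^ (2 * j - 1))) *
    ((Finset.univ.filter (fun A : Matrix (Fin k) (Fin k) (ZMod 2) =>
        A.IsSymm)).card : ℝ) := by
  have hrank (A : Matrix (Fin k) (Fin k) (ZMod 2)) : A.rank = k ↔ IsUnit A := by
    rw [← rank_eq_card_iff_isUnit, Fintype.card_fin]
  simp_rw [hrank, ← Fintype.card_subtype, ← Nat.card_eq_fintype_card]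
  exact numInvSymm_zmod_two_fin k
end

section
/- Let k be a positive integer, C > 0, and S a set of positive integers whose counting function satisfies S(X) := #{n ≤ X : n ∈ S} = (1+o(1)) (C/(k-1)!) X (log log X)^{k-1} / log X. Then ∫_2^{√X} S(t)/(t^2 log(X/t)) dt = (1+o(1)) (C/k!) (log log X)^k / log X as X → ∞. -/
open Filter Topology Real MeasureTheory intervalIntegral Set

/-!
On `[T, √X]`, with `T` fixed but large, `S(t)` lies within a factor `1 ± ε` of
`g(t) = C/(k-1)! · t (log log t)^(k-1) / log t`, while `[2, T]` contributes only
`O(1 / log X)`. Writing `log (X/t) = log X - log t` and splitting `1 / (log t (log X - log t))`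
into partial fractions, `∫_T^√X g(t) / (t² log (X/t)) dt` is `C/(k-1)! / log X` times
`∫_T^√X (log log t)^(k-1) / (t log t) dt = ((log log √X)^k - (log log T)^k) / k`, up to an
error of at most `(log log X)^(k-1)`; since `log log √X = log log X - log 2`, this is
`(1 + o(1)) C/k! · (log log X)^k / log X`.
-/

lemma monotone_natCard_setOf_mem_and_le (S : Set ℕ) :
    Monotone fun X : ℝ => (Nat.card {n : ℕ | n ∈ S ∧ (n : ℝ) ≤ X} : ℝ) := by
  intro a b hab
  have hfin : {n : ℕ | n ∈ S ∧ (n : ℝ) ≤ b}.Finite :=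
    (finite_Iic ⌊b⌋₊).subset fun n hn => Nat.le_floor hn.2
  have hsub : {n : ℕ | n ∈ S ∧ (n : ℝ) ≤ a} ⊆ {n : ℕ | n ∈ S ∧ (n : ℝ) ≤ b} :=
    fun n hn => ⟨hn.1, hn.2.trans hab⟩
  exact Nat.cast_le.2 (Nat.card_mono hfin hsub)

lemma Monotone.intervalIntegrable_div {f w : ℝ → ℝ} {a b : ℝ} (hf : Monotone f)
    (hw : ContinuousOn w (uIcc a b)) (hw0 : ∀ t ∈ uIcc a b, w t ≠ 0) :
    IntervalIntegrable (fun t => f t / w t) volume a b :=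
  hf.intervalIntegrable.mul_continuousOn (hw.inv₀ hw0)

section Comparison

variable {f g w : ℝ → ℝ} {a T b c : ℝ}

lemma integral_div_le_add_mul (haT : a ≤ T) (hTb : T ≤ b)
    (hf : IntervalIntegrable (fun t => f t / w t) volume a b)
    (hg : IntervalIntegrable (fun t => g t / w t) volume T b)
    (hw : ∀ t ∈ Icc T b, 0 ≤ w t) (hfg : ∀ t ∈ Icc T b, f t ≤ c * g t) :
    ∫ t in a..b, f t / w t ≤ (∫ t in a..T, f t / w t) + c * ∫ t in T..b, g t / w t := by
  have hT : T ∈ uIcc a b := mem_uIcc_of_le haT hTb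
  have hf₂ := hf.mono_set (uIcc_subset_uIcc hT right_mem_uIcc)
  rw [← integral_add_adjacent_intervals (hf.mono_set (uIcc_subset_uIcc left_mem_uIcc hT)) hf₂,
    ← intervalIntegral.integral_const_mul]
  gcongr
  refine integral_mono_on hTb hf₂ (hg.const_mul c) fun t ht => ?_
  rw [← mul_div_assoc]
  exact div_le_div_of_nonneg_right (hfg t ht) (hw t ht)

lemma add_mul_le_integral_div (haT : a ≤ T) (hTb : T ≤ b)
    (hf : IntervalIntegrable (fun t => f t / w t) volume a b)
    (hg : IntervalIntegrable (fun t => g t / w t) volume T b)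
    (hw : ∀ t ∈ Icc T b, 0 ≤ w t) (hfg : ∀ t ∈ Icc T b, c * g t ≤ f t) :
    (∫ t in a..T, f t / w t) + c * ∫ t in T..b, g t / w t ≤ ∫ t in a..b, f t / w t := by
  have hT : T ∈ uIcc a b := mem_uIcc_of_le haT hTb
  have hf₂ := hf.mono_set (uIcc_subset_uIcc hT right_mem_uIcc)
  rw [← integral_add_adjacent_intervals (hf.mono_set (uIcc_subset_uIcc left_mem_uIcc hT)) hf₂,
    ← intervalIntegral.integral_const_mul]
  gcongr
  refine integral_mono_on hTb (hg.const_mul c) hf₂ fun t ht => ?_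
  rw [← mul_div_assoc]
  exact div_le_div_of_nonneg_right (hfg t ht) (hw t ht)

end Comparison

lemma tendsto_integral_div_of_tendsto_div {f g D b : ℝ → ℝ} {w : ℝ → ℝ → ℝ} {a : ℝ}
    (hfg : Tendsto (fun t => f t / g t) atTop (𝓝 1)) (hg : ∀ᶠ t in atTop, 0 < g t)
    (hD : ∀ᶠ X in atTop, 0 < D X) (hb : Tendsto b atTop atTop)
    (hw : ∀ᶠ X in atTop, ∀ t ∈ Icc a (b X), 0 ≤ w X t)
    (hf_int : ∀ᶠ X in atTop, IntervalIntegrable (fun t => f t / w X t) volume a (b X))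
    (hg_int : ∀ᶠ T in atTop, ∀ᶠ X in atTop,
      IntervalIntegrable (fun t => g t / w X t) volume T (b X))
    (head : ∀ᶠ T in atTop,
      Tendsto (fun X => (∫ t in a..T, f t / w X t) / D X) atTop (𝓝 0))
    (main : ∀ᶠ T in atTop,
      Tendsto (fun X => (∫ t in T..b X, g t / w X t) / D X) atTop (𝓝 1)) :
    Tendsto (fun X => (∫ t in a..b X, f t / w X t) / D X) atTop (𝓝 1) := by
  set H := fun T X => (∫ t in a..T, f t / w X t) / D X
  set M := fun T X => (∫ t in T..b X, g t / w X t) / D X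
  -- For `c < 1 < c'`, beyond a suitable `T` we have `c * g ≤ f ≤ c' * g`, so the ratio is
  -- squeezed between `H T + c * M T → c` and `H T + c' * M T → c'`.
  have hgood : ∀ P : ℝ → Prop, (∀ᶠ t in atTop, P t) → ∃ T, a ≤ T ∧ (∀ t ≥ T, P t) ∧
      (∀ᶠ X in atTop, T ≤ b X ∧ 0 < D X ∧ (∀ t ∈ Icc a (b X), 0 ≤ w X t) ∧
        IntervalIntegrable (fun t => f t / w X t) volume a (b X) ∧
        IntervalIntegrable (fun t => g t / w X t) volume T (b X)) ∧
      ∀ c, Tendsto (fun X => H T X + c * M T X) atTop (𝓝 c) := by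
    intro P hP
    obtain ⟨T, haT, hPT, hTint, hH, hM⟩ := ((eventually_ge_atTop a).and
      ((eventually_forall_ge_atTop.2 hP).and (hg_int.and (head.and main)))).exists
    refine ⟨T, haT, hPT, (hb.eventually_ge_atTop T).and (hD.and (hw.and (hf_int.and hTint))),
      fun c => ?_⟩
    simpa using hH.add (hM.const_mul c)
  refine tendsto_order.2 ⟨fun c hc => ?_, fun c hc => ?_⟩
  · obtain ⟨T, haT, hT, hX, hlim⟩ := hgood (fun t => (1 + c) / 2 * g t ≤ f t) <| by
      filter_upwards [hfg.eventually (eventually_gt_nhds (by linarith : (1 + c) / 2 < 1)),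
        hg] with t ht hgt
      exact ((lt_div_iff₀ hgt).1 ht).le
    filter_upwards [hX, (hlim ((1 + c) / 2)).eventually
      (eventually_gt_nhds (by linarith : c < (1 + c) / 2))]
      with X ⟨hTb, hDX, hwX, hfX, hgX⟩ hcX
    refine hcX.trans_le ?_
    rw [← mul_div_assoc, ← add_div]
    exact div_le_div_of_nonneg_right (add_mul_le_integral_div haT hTb hfX hgX
      (fun t ht => hwX t ⟨haT.trans ht.1, ht.2⟩) fun t ht => hT t ht.1) hDX.le
  · obtain ⟨T, haT, hT, hX, hlim⟩ := hgood (fun t => f t ≤ (1 + c) / 2 * g t) <| by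
      filter_upwards [hfg.eventually (eventually_lt_nhds (by linarith : 1 < (1 + c) / 2)),
        hg] with t ht hgt
      exact ((div_lt_iff₀ hgt).1 ht).le
    filter_upwards [hX, (hlim ((1 + c) / 2)).eventually
      (eventually_lt_nhds (by linarith : (1 + c) / 2 < c))]
      with X ⟨hTb, hDX, hwX, hfX, hgX⟩ hcX
    refine lt_of_le_of_lt ?_ hcX
    rw [← mul_div_assoc, ← add_div]
    exact div_le_div_of_nonneg_right (integral_div_le_add_mul haT hTb hfX hgX
      (fun t ht => hwX t ⟨haT.trans ht.1, ht.2⟩) fun t ht => hT t ht.1) hDX.le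

lemma tendsto_sub_pow_sub_div_pow {α : Type*} {l : Filter α} {u : α → ℝ}
    (hu : Tendsto u l atTop) (a b : ℝ) (n : ℕ) :
    Tendsto (fun x => ((u x - a) ^ (n + 1) - b) / u x ^ (n + 1)) l (𝓝 1) := by
  have hlim : Tendsto (fun x => (1 - a / u x) ^ (n + 1) - b / u x ^ (n + 1)) l
      (𝓝 ((1 - 0) ^ (n + 1) - 0)) :=
    ((tendsto_const_nhds.sub (tendsto_const_nhds.div_atTop hu)).pow _).sub
      (tendsto_const_nhds.div_atTop ((tendsto_pow_atTop n.succ_ne_zero).comp hu))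
  rw [sub_zero, sub_zero, one_pow] at hlim
  refine hlim.congr' ?_
  filter_upwards [hu.eventually_gt_atTop 0] with x hx
  rw [sub_div, one_sub_div hx.ne', div_pow]

lemma half_log_le_log_div {X t : ℝ} (ht : 0 < t) (htX : t ≤ √X) : log X / 2 ≤ log (X / t) := by
  have hX : 0 < X := sqrt_pos.1 (ht.trans_le htX)
  rw [log_div hX.ne' ht.ne', ← log_sqrt hX.le]
  linarith [log_le_log ht htX, log_sqrt hX.le]

lemma log_div_pos {X t : ℝ} (hX : 1 < X) (ht : 0 < t) (htX : t ≤ √X) : 0 < log (X / t) :=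
  (half_pos (log_pos hX)).trans_le (half_log_le_log_div ht htX)

lemma loglog_sqrt {X : ℝ} (hX : 1 < X) : log (log √X) = log (log X) - log 2 := by
  rw [log_sqrt (by linarith), log_div (log_pos hX).ne' two_ne_zero]

lemma pos_and_log_pos_of_mem_uIcc {a b t : ℝ} (ha : 1 < a) (hab : a ≤ b) (ht : t ∈ uIcc a b) :
    0 < t ∧ 0 < log t := by
  rw [uIcc_of_le hab] at ht
  exact ⟨by linarith [ht.1], log_pos (by linarith [ht.1])⟩

lemma intervalIntegrable_loglog_pow_div (n : ℕ) {a b : ℝ} (ha : 1 < a) (hab : a ≤ b) :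
    IntervalIntegrable (fun t => log (log t) ^ n / (t * log t)) volume a b := by
  have hpos := fun t (ht : t ∈ uIcc a b) => pos_and_log_pos_of_mem_uIcc ha hab ht
  refine ContinuousOn.intervalIntegrable ?_
  fun_prop (disch := intro t ht; obtain ⟨ht0, hlt⟩ := hpos t ht; positivity)

lemma integral_loglog_pow_div (n : ℕ) {a b : ℝ} (ha : 1 < a) (hab : a ≤ b) :
    ∫ t in a..b, log (log t) ^ n / (t * log t) =
      (log (log b) ^ (n + 1) - log (log a) ^ (n + 1)) / (n + 1) := by
  have hderiv : ∀ t ∈ uIcc a b, HasDerivAt (fun t => log (log t) ^ (n + 1) / (n + 1))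
      (log (log t) ^ n / (t * log t)) t := fun t ht => by
    obtain ⟨ht0, hlt⟩ := pos_and_log_pos_of_mem_uIcc ha hab ht
    refine ((((hasDerivAt_log ht0.ne').log hlt.ne').pow (n + 1)).div_const
      (n + 1 : ℝ)).congr_deriv ?_
    push_cast
    field_simp
  rw [integral_eq_sub_of_hasDerivAt hderiv (intervalIntegrable_loglog_pow_div n ha hab), sub_div]

lemma intervalIntegrable_div_sq_mul_log_div {f : ℝ → ℝ} (hf : Monotone f) {a b X : ℝ}
    (ha : 0 < a) (hab : a ≤ b) (hbX : b ≤ √X) (hX : 1 < X) :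
    IntervalIntegrable (fun t => f t / (t ^ 2 * log (X / t))) volume a b := by
  have hpos : ∀ t ∈ uIcc a b, 0 < t ∧ 0 < log (X / t) := fun t ht => by
    rw [uIcc_of_le hab] at ht
    exact ⟨ha.trans_le ht.1, log_div_pos hX (ha.trans_le ht.1) (ht.2.trans hbX)⟩
  refine hf.intervalIntegrable_div ?_ fun t ht => ?_
  · fun_prop (disch := intro t ht; obtain ⟨ht0, hXt⟩ := hpos t ht; positivity)
  · obtain ⟨ht0, hXt⟩ := hpos t ht
    positivity

lemma intervalIntegrable_loglog_integrand (n : ℕ) (c : ℝ) {T X : ℝ} (hT : 1 < T)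
    (hTX : T ≤ √X) :
    IntervalIntegrable (fun t => c * t * log (log t) ^ n / log t / (t ^ 2 * log (X / t)))
      volume T √X := by
  have hX : 1 < X := by simpa using (lt_sqrt zero_le_one).1 (hT.trans_le hTX)
  have hpos : ∀ t ∈ uIcc T √X, 0 < t ∧ 0 < log t ∧ 0 < log (X / t) := fun t ht => by
    rw [uIcc_of_le hTX] at ht
    have ht0 : 0 < t := by linarith [ht.1]
    exact ⟨ht0, log_pos (by linarith [ht.1]), log_div_pos hX ht0 ht.2⟩
  refine ContinuousOn.intervalIntegrable ?_
  fun_prop (disch := intro t ht; obtain ⟨ht0, hlt, hXt⟩ := hpos t ht; positivity)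

lemma loglog_integrand_bounds (n : ℕ) {c X t : ℝ} (hc : 0 ≤ c) (ht : exp 1 ≤ t)
    (htX : t ≤ √X) :
    c / log X * (log (log t) ^ n / (t * log t)) ≤
        c * t * log (log t) ^ n / log t / (t ^ 2 * log (X / t)) ∧
      c * t * log (log t) ^ n / log t / (t ^ 2 * log (X / t)) ≤
        c / log X * (log (log t) ^ n / (t * log t) + 2 * log (log X) ^ n / log X * t⁻¹) := by
  have ht0 : 0 < t := (exp_pos 1).trans_le ht
  have hlt : 1 ≤ log t := (le_log_iff_exp_le ht0).2 ht
  have hX0 : 0 < X := sqrt_pos.1 (ht0.trans_le htX)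
  have hXt : log (X / t) = log X - log t := log_div hX0.ne' ht0.ne'
  have hhalf : log X / 2 ≤ log X - log t := hXt ▸ half_log_le_log_div ht0 htX
  have hlX : 0 < log X - log t := by linarith
  have hΛ : 0 < log X := by linarith
  have hL : 0 ≤ log (log t) := log_nonneg hlt
  have hLX : log (log t) ≤ log (log X) := log_le_log (by linarith) (by linarith)
  have hLX0 : 0 ≤ log (log X) := hL.trans hLX
  have hrw : c * t * log (log t) ^ n / log t / (t ^ 2 * log (X / t)) =
      c * log (log t) ^ n / (t * log t) / (log X - log t) := by
    rw [hXt]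
    field_simp
  rw [hrw]
  constructor
  · calc c / log X * (log (log t) ^ n / (t * log t))
        = c * log (log t) ^ n / (t * log t) / log X := by ring
      _ ≤ _ := by gcongr; linarith
  · have hsplit : c * log (log t) ^ n / (t * log t) / (log X - log t) =
        c / log X * (log (log t) ^ n / (t * log t) + log (log t) ^ n / (t * (log X - log t))) := by
      field_simp
      ring
    have hsecond : log (log t) ^ n / (t * (log X - log t)) ≤ 2 * log (log X) ^ n / log X * t⁻¹ :=
      calc log (log t) ^ n / (t * (log X - log t))
          ≤ log (log X) ^ n / (t * (log X / 2)) := by gcongr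
        _ = 2 * log (log X) ^ n / log X * t⁻¹ := by field_simp
    rw [hsplit]
    gcongr

lemma integral_loglog_integrand_bounds (n : ℕ) {c T X : ℝ} (hc : 0 ≤ c) (hT : exp 1 ≤ T)
    (hTX : T ≤ √X) :
    c / log X * ((log (log √X) ^ (n + 1) - log (log T) ^ (n + 1)) / (n + 1)) ≤
        ∫ t in T..√X, c * t * log (log t) ^ n / log t / (t ^ 2 * log (X / t)) ∧
      ∫ t in T..√X, c * t * log (log t) ^ n / log t / (t ^ 2 * log (X / t)) ≤
        c / log X * ((log (log √X) ^ (n + 1) - log (log T) ^ (n + 1)) / (n + 1) +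
          log (log X) ^ n) := by
  have hT1 : 1 < T := (one_lt_exp_iff.2 one_pos).trans_le hT
  have hX0 : 0 < X := sqrt_pos.1 (by linarith)
  have hlogT : 1 ≤ log T := (le_log_iff_exp_le (by linarith)).2 hT
  have hlogX : log X / 2 = log √X := (log_sqrt hX0.le).symm
  have hlogTX : log T ≤ log X / 2 := hlogX ▸ log_le_log (by linarith) hTX
  have hΛ : 0 < log X := by linarith
  have hbounds := fun t (ht : t ∈ Icc T √X) => loglog_integrand_bounds n hc (hT.trans ht.1) ht.2
  have hint := intervalIntegrable_loglog_integrand n c hT1 hTX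
  have hintP := intervalIntegrable_loglog_pow_div n hT1 hTX
  have hintInv : IntervalIntegrable (fun t => t⁻¹) volume T √X :=
    intervalIntegral.intervalIntegrable_inv
      (fun t ht => (pos_and_log_pos_of_mem_uIcc hT1 hTX ht).1.ne') continuousOn_id
  rw [← integral_loglog_pow_div n hT1 hTX]
  constructor
  · rw [← intervalIntegral.integral_const_mul]
    exact integral_mono_on hTX (hintP.const_mul _) hint fun t ht => (hbounds t ht).1
  · have hlog : 2 * log (log X) ^ n / log X * log (√X / T) ≤ log (log X) ^ n := by
      have hLX : 0 ≤ log (log X) := log_nonneg (by linarith)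
      calc 2 * log (log X) ^ n / log X * log (√X / T)
          ≤ 2 * log (log X) ^ n / log X * (log X / 2) := by
            rw [log_div (by positivity) (by linarith), ← hlogX]
            gcongr
            linarith
        _ = log (log X) ^ n := by field_simp
    calc _ ≤ ∫ t in T..√X,
          c / log X * (log (log t) ^ n / (t * log t) + 2 * log (log X) ^ n / log X * t⁻¹) :=
          integral_mono_on hTX hint ((hintP.add (hintInv.const_mul _)).const_mul _)
            fun t ht => (hbounds t ht).2
      _ = c / log X * ((∫ t in T..√X, log (log t) ^ n / (t * log t)) +
          2 * log (log X) ^ n / log X * log (√X / T)) := by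
        rw [intervalIntegral.integral_const_mul, integral_add hintP (hintInv.const_mul _),
          intervalIntegral.integral_const_mul, integral_inv_of_pos (by linarith) (by linarith)]
      _ ≤ _ := by gcongr

lemma tendsto_integral_loglog_integrand_div (n : ℕ) {C T : ℝ} (hC : 0 < C) (hT : exp 1 ≤ T) :
    Tendsto (fun X =>
      (∫ t in T..√X, C / n.factorial * t * log (log t) ^ n / log t / (t ^ 2 * log (X / t))) /
        (C / (n + 1).factorial * log (log X) ^ (n + 1) / log X)) atTop (𝓝 1) := by
  have hLL : Tendsto (fun X => log (log X)) atTop atTop :=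
    tendsto_log_atTop.comp tendsto_log_atTop
  set R := fun X =>
    ((log (log X) - log 2) ^ (n + 1) - log (log T) ^ (n + 1)) / log (log X) ^ (n + 1)
  have hR : Tendsto R atTop (𝓝 1) := tendsto_sub_pow_sub_div_pow hLL _ _ n
  have hR' : Tendsto (fun X => R X + (n + 1) / log (log X)) atTop (𝓝 1) := by
    simpa using hR.add (tendsto_const_nhds.div_atTop hLL)
  have hbounds : ∀ᶠ X in atTop,
      R X * (C / (n + 1).factorial * log (log X) ^ (n + 1) / log X) ≤
        ∫ t in T..√X, C / n.factorial * t * log (log t) ^ n / log t / (t ^ 2 * log (X / t)) ∧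
      (∫ t in T..√X, C / n.factorial * t * log (log t) ^ n / log t / (t ^ 2 * log (X / t))) ≤
        (R X + (n + 1) / log (log X)) *
          (C / (n + 1).factorial * log (log X) ^ (n + 1) / log X) ∧
      0 < C / (n + 1).factorial * log (log X) ^ (n + 1) / log X := by
    filter_upwards [tendsto_sqrt_atTop.eventually_ge_atTop T, eventually_gt_atTop 1,
      hLL.eventually_gt_atTop 0] with X hTX hX hLX
    obtain ⟨hlow, hup⟩ :=
      integral_loglog_integrand_bounds n (div_nonneg hC.le (Nat.cast_nonneg _)) hT hTX
    have hΛ : 0 < log X := log_pos hX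
    rw [loglog_sqrt hX] at hlow hup
    simp only [R, Nat.factorial_succ, Nat.cast_mul, Nat.cast_succ]
    refine ⟨Eq.trans_le ?_ hlow, hup.trans_eq ?_, by positivity⟩
    · field_simp
    · field_simp
      ring
  refine tendsto_of_tendsto_of_tendsto_of_le_of_le' hR hR' ?_ ?_
  · filter_upwards [hbounds] with X ⟨hlow, _, hD⟩
    exact (le_div_iff₀ hD).2 hlow
  · filter_upwards [hbounds] with X ⟨_, hup, hD⟩
    exact (div_le_iff₀ hD).2 hup

lemma tendsto_loglog_pow_div_log_mul_log (n : ℕ) {c : ℝ} (hc : 0 < c) :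
    Tendsto (fun X => c * log (log X) ^ (n + 1) / log X * log X) atTop atTop := by
  refine (((tendsto_pow_atTop n.succ_ne_zero).comp
    (tendsto_log_atTop.comp tendsto_log_atTop)).const_mul_atTop hc).congr' ?_
  filter_upwards [eventually_gt_atTop 1] with X hX
  rw [div_mul_cancel₀ _ (log_pos hX).ne']
  rfl

lemma tendsto_initial_integral_div_zero {f D : ℝ → ℝ} (hf : Monotone f) (hf0 : ∀ t, 0 ≤ f t)
    (hD : Tendsto (fun X => D X * log X) atTop atTop) {T : ℝ} (hT : 2 ≤ T) :
    Tendsto (fun X => (∫ t in 2..T, f t / (t ^ 2 * log (X / t))) / D X) atTop (𝓝 0) := by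
  have hbounds : ∀ᶠ X in atTop, 0 ≤ (∫ t in 2..T, f t / (t ^ 2 * log (X / t))) / D X ∧
      (∫ t in 2..T, f t / (t ^ 2 * log (X / t))) / D X ≤ T * f T / (D X * log X) := by
    filter_upwards [tendsto_sqrt_atTop.eventually_ge_atTop T, eventually_gt_atTop 1,
      hD.eventually_gt_atTop 0] with X hTX hX hDX
    have hΛ : 0 < log X := log_pos hX
    have hD0 : 0 < D X := pos_of_mul_pos_left hDX hΛ.le
    have hpos : ∀ t ∈ Icc 2 T, 0 < t ∧ log X / 2 ≤ log (X / t) := fun t ht =>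
      ⟨by linarith [ht.1], half_log_le_log_div (by linarith [ht.1]) (ht.2.trans hTX)⟩
    have hint := intervalIntegrable_div_sq_mul_log_div hf two_pos hT hTX hX
    constructor
    · refine div_nonneg (integral_nonneg hT fun t ht => ?_) hD0.le
      obtain ⟨ht0, hXt⟩ := hpos t ht
      have := hf0 t
      have : 0 < log (X / t) := by linarith
      positivity
    · have hpt : ∀ t ∈ Icc 2 T, f t / (t ^ 2 * log (X / t)) ≤ f T / log X := fun t ht => by
        obtain ⟨ht0, hXt⟩ := hpos t ht
        refine div_le_div₀ (hf0 T) (hf ht.2) hΛ ?_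
        have h4 : 4 ≤ t ^ 2 := by nlinarith [ht.1]
        nlinarith [mul_le_mul h4 hXt (by positivity) (by positivity)]
      rw [mul_comm (D X), ← div_div]
      gcongr
      calc _ ≤ ∫ t in 2..T, f T / log X := integral_mono_on hT hint intervalIntegrable_const hpt
        _ = (T - 2) * (f T / log X) := by rw [intervalIntegral.integral_const, smul_eq_mul]
        _ ≤ T * f T / log X := by
          rw [mul_div_assoc]
          gcongr
          · exact div_nonneg (hf0 T) hΛ.le
          · linarith
  exact tendsto_of_tendsto_of_tendsto_of_le_of_le' tendsto_const_nhds
    (tendsto_const_nhds.div_atTop hD) (hbounds.mono fun _ h => h.1) (hbounds.mono fun _ h => h.2)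

theorem integral_counting_asymptotic_general (k : ℕ) (hk : 1 ≤ k) (C : ℝ) (hC : 0 < C)
    (S : Set ℕ)
    (cnt : ℝ → ℝ)
    (hcnt : ∀ X : ℝ, cnt X = (Nat.card {n : ℕ | n ∈ S ∧ (n : ℝ) ≤ X} : ℝ))
    (hasymp : Tendsto (fun X : ℝ =>
        cnt X / (C / (Nat.factorial (k - 1)) * X * (Real.log (Real.log X)) ^ (k - 1)
          / Real.log X)) atTop (nhds 1)) :
    Tendsto (fun X : ℝ =>
      (∫ t in (2:ℝ)..(Real.sqrt X), cnt t / (t ^ 2 * Real.log (X / t))) /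
        (C / (Nat.factorial k) * (Real.log (Real.log X)) ^ k / Real.log X))
      atTop (nhds 1) := by
  obtain ⟨n, rfl⟩ := Nat.exists_eq_add_of_le' hk
  rw [Nat.add_sub_cancel] at hasymp
  have hmono : Monotone cnt := funext hcnt ▸ monotone_natCard_setOf_mem_and_le S
  have hLL : Tendsto (fun X => log (log X)) atTop atTop :=
    tendsto_log_atTop.comp tendsto_log_atTop
  have hlarge : ∀ᶠ X in atTop, 2 ≤ √X ∧ 1 < X ∧ 0 < log (log X) :=
    (tendsto_sqrt_atTop.eventually_ge_atTop 2).and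
      ((eventually_gt_atTop 1).and (hLL.eventually_gt_atTop 0))
  refine tendsto_integral_div_of_tendsto_div (w := fun X t => t ^ 2 * log (X / t)) hasymp
    ?_ ?_ tendsto_sqrt_atTop ?_ ?_ ?_ ?_ ?_
  · filter_upwards [hlarge] with t ⟨_, ht, hLt⟩
    have := log_pos ht
    positivity
  · filter_upwards [hlarge] with X ⟨_, hX, hLX⟩
    have := log_pos hX
    positivity
  · filter_upwards [hlarge] with X ⟨_, hX, _⟩ t ht
    exact (mul_pos (by nlinarith [ht.1]) (log_div_pos hX (by linarith [ht.1]) ht.2)).le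
  · filter_upwards [hlarge] with X ⟨h2X, hX, _⟩
    exact intervalIntegrable_div_sq_mul_log_div hmono two_pos h2X le_rfl hX
  · filter_upwards [eventually_gt_atTop 1] with T hT
    filter_upwards [tendsto_sqrt_atTop.eventually_ge_atTop T] with X hTX
    exact intervalIntegrable_loglog_integrand n _ hT hTX
  · filter_upwards [eventually_ge_atTop 2] with T hT
    exact tendsto_initial_integral_div_zero hmono (fun t => hcnt t ▸ Nat.cast_nonneg _)
      (tendsto_loglog_pow_div_log_mul_log n (by positivity)) hT
  · filter_upwards [eventually_ge_atTop (exp 1)] with T hT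
    exact tendsto_integral_loglog_integrand_div n hC hT

/-- If S is a set of positive integers whose counting function satisfies
S(X) = (1+o(1)) (C/(k-1)!) X (log log X)^{k-1}/log X, then
∫_2^{√X} S(t)/(t² log(X/t)) dt = (1+o(1)) (C/k!) (log log X)^k / log X. -/
theorem integral_counting_asymptotic (k : ℕ) (hk : 1 ≤ k) (C : ℝ) (hC : 0 < C)
    (S : Set ℕ) (hS : S ⊆ {n : ℕ | 0 < n})
    (cnt : ℝ → ℝ)
    (hcnt : ∀ X : ℝ, cnt X = (Nat.card {n : ℕ | n ∈ S ∧ (n : ℝ) ≤ X} : ℝ))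
    (hasymp : Tendsto (fun X : ℝ =>
        cnt X / (C / (Nat.factorial (k - 1)) * X * (Real.log (Real.log X)) ^ (k - 1)
          / Real.log X)) atTop (nhds 1)) :
    Tendsto (fun X : ℝ =>
      (∫ t in (2:ℝ)..(Real.sqrt X), cnt t / (t ^ 2 * Real.log (X / t))) /
        (C / (Nat.factorial k) * (Real.log (Real.log X)) ^ k / Real.log X))
      atTop (nhds 1) :=
  integral_counting_asymptotic_general k hk C hC S cnt hcnt hasymp
end

section
/- For every finite undirected simple graph G on k vertices, and any choice of residues where exactly one vertex is assigned 3 mod 4 and the rest 1 mod 4, there exist infinitely many square-free positive integers n = p_1···p_k with primes in the prescribed congruence classes mod 4 such that G(n) is isomorphic to G (via the labeling p_i ↦ v_i). -/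
/-!
Choose the primes one after another. Once `p₀, …, p_{m-1}` are fixed, the conditions on
the next prime `q` — its class mod 4 and the signs `(q / pⱼ)` for `j < m` — each prescribe
a unit residue class of `q` modulo `4` or modulo some `pⱼ`; by the Chinese remainder theorem
they form one unit class modulo `4 p₀ ⋯ p_{m-1}`, which contains arbitrarily large primes by
Dirichlet's theorem. Since every pair of the chosen primes contains one that is `1 mod 4`,
quadratic reciprocity gives `(pᵢ / pⱼ) = (pⱼ / pᵢ)`, so the edges prescribed from the later
prime to the earlier one are the edges of `G`.
-/

open Function Finset

theorem Nat.exists_prime_gt_forall_natCast_eq {ι : Type*} [Fintype ι] (n : ι → ℕ)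
    [∀ i, NeZero (n i)] (hn : Pairwise (Nat.Coprime on n)) (u : ∀ i, (ZMod (n i))ˣ) (N : ℕ) :
    ∃ q > N, q.Prime ∧ ∀ i, (q : ZMod (n i)) = u i := by
  have : NeZero (∏ i, n i) := ⟨prod_ne_zero_iff.mpr fun i _ ↦ NeZero.ne _⟩
  let e := ZMod.prodEquivPi n hn
  have hunit : IsUnit (e.symm fun i ↦ (u i : ZMod (n i))) :=
    (Pi.isUnit_iff.mpr fun i ↦ (u i).isUnit).map e.symm
  obtain ⟨q, hqN, hq, hqu⟩ := Nat.forall_exists_prime_gt_and_eq_mod hunit N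
  refine ⟨q, hqN, hq, fun i ↦ ?_⟩
  rw [← map_natCast (ZMod.castHom (dvd_prod_of_mem n (mem_univ i)) (ZMod (n i))),
    ← ZMod.prodEquivPi_apply n hn, hqu, RingEquiv.apply_symm_apply]

theorem FiniteField.exists_unit_quadraticChar_eq_neg_one_iff {F : Type*} [Field F] [Fintype F]
    [DecidableEq F] (hF : ringChar F ≠ 2) (P : Prop) :
    ∃ a : Fˣ, (quadraticChar F a = -1 ↔ P) := by
  by_cases hP : P
  · obtain ⟨a, ha⟩ := quadraticChar_exists_neg_one hF
    have ha0 : a ≠ 0 := by rintro rfl; simp at ha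
    exact ⟨Units.mk0 a ha0, iff_of_true ha hP⟩
  · exact ⟨1, iff_of_false (by simp) hP⟩

theorem Nat.exists_prime_gt_natCast_eq_and_jacobiSym_eq_neg_one_iff {ι : Type*} [Fintype ι]
    (m : ℕ) [NeZero m] (u : (ZMod m)ˣ) (ℓ : ι → ℕ) (hℓ : Injective ℓ)
    (hprime : ∀ i, (ℓ i).Prime) (htwo : ∀ i, ℓ i ≠ 2) (hcop : ∀ i, m.Coprime (ℓ i))
    (P : ι → Prop) (N : ℕ) :
    ∃ q > N, q.Prime ∧ (q : ZMod m) = u ∧ ∀ i, (jacobiSym q (ℓ i) = -1 ↔ P i) := by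
  have (i : ι) : Fact (ℓ i).Prime := ⟨hprime i⟩
  choose a ha using fun i ↦ FiniteField.exists_unit_quadraticChar_eq_neg_one_iff
    (F := ZMod (ℓ i)) (by rw [ZMod.ringChar_zmod_n]; exact htwo i) (P i)
  let n : Option ι → ℕ := fun o ↦ o.elim m ℓ
  have (o : Option ι) : NeZero (n o) := by
    cases o with
    | none => exact inferInstanceAs (NeZero m)
    | some i => exact ⟨(hprime i).ne_zero⟩
  have hn : Pairwise (Nat.Coprime on n) := by
    rintro (_ | i) (_ | j) hij
    · exact absurd rfl hij
    · exact hcop j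
    · exact (hcop i).symm
    · exact (Nat.coprime_primes (hprime i) (hprime j)).mpr (hℓ.ne (by simpa using hij))
  obtain ⟨q, hqN, hq, hqu⟩ := Nat.exists_prime_gt_forall_natCast_eq n hn
    (fun o ↦ match o with | none => u | some i => a i) N
  refine ⟨q, hqN, hq, hqu none, fun i ↦ ?_⟩
  have hqa : (q : ZMod (ℓ i)) = a i := hqu (some i)
  rw [← jacobiSym.legendreSym.to_jacobiSym, legendreSym, Int.cast_natCast, hqa]
  exact ha i

theorem Nat.exists_strictMono_primes_natCast_eq_and_jacobiSym_eq_neg_one_iff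
    (m : ℕ) [NeZero m] :
    ∀ {n : ℕ} (u : Fin n → (ZMod m)ˣ) (P : Fin n → Fin n → Prop) (N : ℕ),
    ∃ p : Fin n → ℕ, StrictMono p ∧ ∀ i, N < p i ∧ (p i).Prime ∧ (p i : ZMod m) = u i ∧
      ∀ j < i, (jacobiSym (p i) (p j) = -1 ↔ P j i)
  | 0, _, _, _ => ⟨finZeroElim, fun i ↦ i.elim0, fun i ↦ i.elim0⟩
  | n + 1, u, P, N => by
    -- primes above `m + 2` are odd and coprime to `m`, as the choice of the last prime requires
    obtain ⟨p, hp_mono, hp⟩ := exists_strictMono_primes_natCast_eq_and_jacobiSym_eq_neg_one_iff m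
      (u ∘ Fin.castSucc) (fun i j ↦ P i.castSucc j.castSucc) (N + m + 2)
    obtain ⟨q, hqN, hq, hqu, hqP⟩ := exists_prime_gt_natCast_eq_and_jacobiSym_eq_neg_one_iff m
      (u (Fin.last n)) p hp_mono.injective (fun i ↦ (hp i).2.1)
      (fun i ↦ by have := (hp i).1; omega)
      (fun i ↦ (coprime_of_lt_prime (NeZero.ne m) (by have := (hp i).1; omega) (hp i).2.1).symm)
      (fun j ↦ P j.castSucc (Fin.last n)) (N + univ.sup p)
    have hpq (i : Fin n) : p i < q := (le_sup (f := p) (mem_univ i)).trans_lt (by omega)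
    refine ⟨Fin.snoc p q, fun j i hji ↦ ?_, fun i ↦ ?_⟩
    · obtain ⟨j, rfl⟩ := Fin.exists_castSucc_eq.mpr (Fin.ne_last_of_lt hji)
      induction i using Fin.lastCases with
      | last => simpa using hpq j
      | cast i => simpa using hp_mono (Fin.castSucc_lt_castSucc_iff.mp hji)
    · induction i using Fin.lastCases with
      | last =>
        simp only [Fin.snoc_last]
        refine ⟨by omega, hq, hqu, fun j hj ↦ ?_⟩
        obtain ⟨j, rfl⟩ := Fin.exists_castSucc_eq.mpr (Fin.ne_last_of_lt hj)
        simpa using hqP j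
      | cast i =>
        obtain ⟨hN, hpi, hu, hP⟩ := hp i
        simp only [Fin.snoc_castSucc]
        refine ⟨by omega, hpi, hu, fun j hj ↦ ?_⟩
        obtain ⟨j, rfl⟩ := Fin.exists_castSucc_eq.mpr (Fin.ne_last_of_lt hj)
        simpa using hP j (Fin.castSucc_lt_castSucc_iff.mp hj)

theorem infinitely_many_n_realizing_graph_general (k : ℕ)
    (G : SimpleGraph (Fin k)) (i₀ : Fin k) :
    {n : ℕ | Squarefree n ∧ ∃ p : Fin k → ℕ, Function.Injective p ∧
      (∀ i, (p i).Prime) ∧ n = ∏ i, p i ∧ p i₀ % 4 = 3 ∧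
      (∀ i, i ≠ i₀ → p i % 4 = 1) ∧
      ∀ i j : Fin k, i ≠ j →
        (G.Adj i j ↔ jacobiSym (p i : ℤ) (p j) = -1)}.Infinite := by
  refine Set.infinite_of_forall_exists_gt fun N ↦ ?_
  obtain ⟨p, hp_mono, hp⟩ :=
    Nat.exists_strictMono_primes_natCast_eq_and_jacobiSym_eq_neg_one_iff 4
      (fun i ↦ if i = i₀ then -1 else 1) G.Adj N
  have hmod (i : Fin k) : p i % 4 = if i = i₀ then 3 else 1 := by
    rw [← ZMod.val_natCast, (hp i).2.2.1]
    split_ifs <;> rfl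
  have hodd (i : Fin k) : Odd (p i) := by
    have := hmod i
    split_ifs at this <;> exact Nat.odd_iff.mpr (by omega)
  have hsymm (i j : Fin k) (hij : i ≠ j) : jacobiSym (p i) (p j) = jacobiSym (p j) (p i) := by
    by_cases hi : i = i₀
    · subst hi
      exact jacobiSym.quadratic_reciprocity_one_mod_four' (hodd i) (by simpa [hij.symm] using hmod j)
    · exact jacobiSym.quadratic_reciprocity_one_mod_four (by simpa [hi] using hmod i) (hodd j)
  have hcop : Pairwise (IsRelPrime on p) := fun i j hij ↦ Nat.coprime_iff_isRelPrime.mp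
    ((Nat.coprime_primes (hp i).2.1 (hp j).2.1).mpr (hp_mono.injective.ne hij))
  refine ⟨∏ i, p i, ⟨?_, p, hp_mono.injective, fun i ↦ (hp i).2.1, rfl,
    by simpa using hmod i₀, fun i hi ↦ by simpa [hi] using hmod i, fun i j hij ↦ ?_⟩, ?_⟩
  · exact squarefree_prod_of_pairwise_isCoprime (fun i _ j _ hij ↦ hcop hij)
      fun i _ ↦ (hp i).2.1.squarefree
  · rcases hij.lt_or_gt with h | h
    · rw [hsymm i j hij]
      exact ((hp j).2.2.2 i h).symm
    · rw [G.adj_comm]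
      exact ((hp i).2.2.2 j h).symm
  · exact (hp i₀).1.trans_le (single_le_prod' (fun i _ ↦ (hp i).2.1.one_lt.le) (mem_univ i₀))

/-- For every undirected simple graph G on k vertices and any assignment
where one vertex i₀ is assigned the class 3 mod 4 and the rest 1 mod 4, there are
infinitely many square-free n = p₁⋯p_k with primes in the prescribed classes such that
G(n) (with edges where the Legendre symbol is -1) realizes G under p_i ↦ v_i. -/
theorem infinitely_many_n_realizing_graph (k : ℕ) (hk : 1 ≤ k)
    (G : SimpleGraph (Fin k)) (i₀ : Fin k) :
    {n : ℕ | Squarefree n ∧ ∃ p : Fin k → ℕ, Function.Injective p ∧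
      (∀ i, (p i).Prime) ∧ n = ∏ i, p i ∧ p i₀ % 4 = 3 ∧
      (∀ i, i ≠ i₀ → p i % 4 = 1) ∧
      ∀ i j : Fin k, i ≠ j →
        (G.Adj i j ↔ jacobiSym (p i : ℤ) (p j) = -1)}.Infinite :=
  infinitely_many_n_realizing_graph_general k G i₀
end

section
/- For every k ≥ 1 and 0 ≤ e ≤ k-1, the quantities q(k,e) = 2^{C(k-e,2) - C(k,2)} d(k-1,e) ∏_{j=1}^{⌊(k-e)/2⌋}(1 - (1/2)^{2j-1}), with d(m,e) = ∏_{i=0}^{e-1}(2^m - 2^i)/(2^e - 2^i), satisfy Σ_{e=0}^{k-1} q(k,e) = 1. -/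
/-!
`q(k, ·)` is the law of the corank of a uniformly random symmetric `(k-1) × (k-1)` matrix over
`𝔽₂`. Bordering it by a random row and column moves the corank from `e` to `e + 1`, `e` or
`e - 1` with probabilities `2^{-(e+1)}`, `2^{-(e+1)}` and `1 - 2^{-e}`, and accordingly the closed
formula satisfies
`q(k+1, e+1) = 2^{-(e+1)} q(k, e) + 2^{-(e+2)} q(k, e+1) + (1 - 2^{-(e+2)}) q(k, e+2)`
(checked for each parity of `k - e` separately, because of the factor indexed by `⌊(k-e)/2⌋`).
The transition probabilities out of each state sum to `1`, so the total mass `∑ₑ q(k, e)` is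
constant in `k`, and `q(1, 0) = 1`.
-/

open Finset

noncomputable section

def gaussBinomTwo (n e : ℕ) : ℝ :=
  ∏ i ∈ range e, ((2:ℝ) ^ n - 2 ^ i) / ((2:ℝ) ^ e - 2 ^ i)

def oddPowProd (r : ℕ) : ℝ := ∏ j ∈ Icc 1 (r / 2), (1 - (1/2 : ℝ) ^ (2 * j - 1))

-- `corankProb k e` is `q(k, e)`, and `gaussBinomTwo n e` is `d(n, e)`.
def corankProb (k e : ℕ) : ℝ :=
  (2:ℝ) ^ (((k - e).choose 2 : ℤ) - (k.choose 2 : ℤ)) * gaussBinomTwo (k - 1) e *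
    oddPowProd (k - e)

end

theorem two_pow_sub_two_pow_ne_zero {i n : ℕ} (h : i ≠ n) : (2:ℝ) ^ n - 2 ^ i ≠ 0 :=
  sub_ne_zero.2 fun h' => h (Nat.pow_right_injective le_rfl (by exact_mod_cast h'.symm))

theorem two_pow_sub_one_ne_zero {n : ℕ} (h : n ≠ 0) : (2:ℝ) ^ n - 1 ≠ 0 := by
  simpa using two_pow_sub_two_pow_ne_zero (Ne.symm h)

theorem prod_range_two_pow_sub_ne_zero (e : ℕ) : ∏ i ∈ range e, ((2:ℝ) ^ e - 2 ^ i) ≠ 0 :=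
  prod_ne_zero_iff.2 fun _ hi => two_pow_sub_two_pow_ne_zero (mem_range.1 hi).ne

theorem prod_range_succ_two_pow_sub (m e : ℕ) :
    ∏ i ∈ range (e + 1), ((2:ℝ) ^ (m + 1) - 2 ^ i)
      = ((2:ℝ) ^ (m + 1) - 1) * 2 ^ e * ∏ i ∈ range e, ((2:ℝ) ^ m - 2 ^ i) := by
  have (i : ℕ) : (2:ℝ) ^ (m + 1) - 2 ^ (i + 1) = 2 * (2 ^ m - 2 ^ i) := by ring
  simp only [prod_range_succ', this, prod_mul_distrib, prod_const, card_range, pow_zero]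
  ring

theorem gaussBinomTwo_eq_div (n e : ℕ) : gaussBinomTwo n e =
    (∏ i ∈ range e, ((2:ℝ) ^ n - 2 ^ i)) / ∏ i ∈ range e, ((2:ℝ) ^ e - 2 ^ i) :=
  prod_div_distrib ..

theorem gaussBinomTwo_zero_right (n : ℕ) : gaussBinomTwo n 0 = 1 := by simp [gaussBinomTwo]

theorem gaussBinomTwo_one_right (n : ℕ) : gaussBinomTwo n 1 = 2 ^ n - 1 := by
  norm_num [gaussBinomTwo]

theorem gaussBinomTwo_self (n : ℕ) : gaussBinomTwo n n = 1 :=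
  div_self (prod_range_two_pow_sub_ne_zero n) |> (gaussBinomTwo_eq_div n n).trans

theorem gaussBinomTwo_eq_zero_of_lt {n e : ℕ} (h : n < e) : gaussBinomTwo n e = 0 :=
  prod_eq_zero (mem_range.2 h) (by simp)

theorem gaussBinomTwo_succ_right (n e : ℕ) :
    gaussBinomTwo n (e + 1) * (((2:ℝ) ^ (e + 1) - 1) * 2 ^ e)
      = gaussBinomTwo n e * (2 ^ n - 2 ^ e) := by
  have := prod_range_two_pow_sub_ne_zero e
  have := two_pow_sub_one_ne_zero e.succ_ne_zero
  rw [gaussBinomTwo_eq_div, gaussBinomTwo_eq_div, prod_range_succ, prod_range_succ_two_pow_sub]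
  field_simp

theorem gaussBinomTwo_succ_left (n e : ℕ) :
    gaussBinomTwo (n + 1) (e + 1) * (2 ^ n - 2 ^ e)
      = gaussBinomTwo n (e + 1) * ((2 ^ (n + 1) - 1) * 2 ^ e) := by
  have := prod_range_two_pow_sub_ne_zero (e + 1)
  rw [gaussBinomTwo_eq_div, gaussBinomTwo_eq_div, prod_range_succ_two_pow_sub,
    prod_range_succ (fun i => (2:ℝ) ^ n - 2 ^ i) e]
  field_simp

theorem choose_two_succ (a : ℕ) : (a + 1).choose 2 = a.choose 2 + a := by
  rw [Nat.choose_succ_succ', Nat.choose_one_right, add_comm]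

theorem oddPowProd_succ_of_even {r : ℕ} (h : Even r) : oddPowProd (r + 1) = oddPowProd r := by
  obtain ⟨m, rfl⟩ := h
  rw [oddPowProd, oddPowProd, show (m + m + 1) / 2 = (m + m) / 2 by omega]

theorem oddPowProd_succ_of_odd {r : ℕ} (h : Odd r) :
    oddPowProd (r + 1) = oddPowProd r * (1 - (2 ^ r)⁻¹) := by
  obtain ⟨m, rfl⟩ := h
  rw [oddPowProd, oddPowProd, show (2 * m + 1 + 1) / 2 = m + 1 by omega,
    show (2 * m + 1) / 2 = m by omega, prod_Icc_succ_top (by omega),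
    show 2 * (m + 1) - 1 = 2 * m + 1 by omega, one_div, inv_pow]

theorem corankProb_eq (k e : ℕ) : corankProb k e =
    2 ^ (k - e).choose 2 / 2 ^ k.choose 2 * gaussBinomTwo (k - 1) e * oddPowProd (k - e) := by
  rw [corankProb, zpow_sub₀ two_ne_zero, zpow_natCast, zpow_natCast]

theorem corankProb_eq_zero_of_le {k e : ℕ} (hk : 1 ≤ k) (h : k ≤ e) : corankProb k e = 0 := by
  rw [corankProb, gaussBinomTwo_eq_zero_of_lt (by omega), mul_zero, zero_mul]

theorem corankProb_add_one_self (e : ℕ) : corankProb (e + 1) e = (1/2) ^ (e + 1).choose 2 := by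
  simp [corankProb_eq, gaussBinomTwo_self, oddPowProd]

theorem corankProb_succ_zero {k : ℕ} (hk : 1 ≤ k) :
    corankProb (k + 1) 0 = 1/2 * corankProb k 0 + 1/2 * corankProb k 1 := by
  obtain ⟨n, rfl⟩ : ∃ n, k = n + 1 := ⟨k - 1, by omega⟩
  simp only [corankProb_eq, Nat.sub_zero, Nat.add_sub_cancel, gaussBinomTwo_zero_right,
    gaussBinomTwo_one_right, choose_two_succ, pow_add]
  rcases Nat.even_or_odd n with hn | hn
  · rw [oddPowProd_succ_of_odd hn.add_one, oddPowProd_succ_of_even hn]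
    field_simp
    ring
  · rw [oddPowProd_succ_of_even hn.add_one, oddPowProd_succ_of_odd hn]
    field_simp
    ring

theorem corankProb_succ_succ_of_add_two_le {k e : ℕ} (h : e + 2 ≤ k) :
    corankProb (k + 1) (e + 1) = (1/2) ^ (e + 1) * corankProb k e
      + (1/2) ^ (e + 2) * corankProb k (e + 1) + (1 - (1/2) ^ (e + 2)) * corankProb k (e + 2) := by
  obtain ⟨t, rfl⟩ : ∃ t, k = e + t + 1 + 1 := ⟨k - e - 2, by omega⟩
  have hne₁ : (2:ℝ) ^ (e + 1) - 1 ≠ 0 := two_pow_sub_one_ne_zero (by omega)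
  have hne₂ : (2:ℝ) ^ (e + 1 + 1) - 1 ≠ 0 := two_pow_sub_one_ne_zero (by omega)
  have hne₃ := two_pow_sub_two_pow_ne_zero (show e ≠ e + t + 1 by omega)
  have hright₁ := (eq_div_iff (mul_ne_zero hne₁ (by positivity))).2
    (gaussBinomTwo_succ_right (e + t + 1) e)
  have hright₂ := (eq_div_iff (mul_ne_zero hne₂ (by positivity))).2
    (gaussBinomTwo_succ_right (e + t + 1) (e + 1))
  have hleft := (eq_div_iff hne₃).2 (gaussBinomTwo_succ_left (e + t + 1) e)
  simp only [corankProb_eq, show e + t + 1 + 1 + 1 - (e + 1) = t + 1 + 1 by omega,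
    show e + t + 1 + 1 - e = t + 1 + 1 by omega, show e + t + 1 + 1 - (e + 1) = t + 1 by omega,
    show e + t + 1 + 1 - (e + 2) = t by omega, Nat.add_sub_cancel, choose_two_succ, one_div,
    inv_pow]
  rw [hleft, hright₂, hright₁]
  rcases Nat.even_or_odd t with ht | ht
  · rw [oddPowProd_succ_of_odd ht.add_one, oddPowProd_succ_of_even ht]
    field_simp
    ring
  · rw [oddPowProd_succ_of_even ht.add_one, oddPowProd_succ_of_odd ht]
    field_simp
    ring

theorem corankProb_succ_succ {k e : ℕ} (h : e < k) :
    corankProb (k + 1) (e + 1) = (1/2) ^ (e + 1) * corankProb k e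
      + (1/2) ^ (e + 2) * corankProb k (e + 1) + (1 - (1/2) ^ (e + 2)) * corankProb k (e + 2) := by
  obtain rfl | h := show k = e + 1 ∨ e + 2 ≤ k by omega
  · rw [corankProb_eq_zero_of_le (k := e + 1) (e := e + 1) (by omega) le_rfl,
      corankProb_eq_zero_of_le (k := e + 1) (e := e + 2) (by omega) (by omega),
      corankProb_add_one_self, corankProb_add_one_self, choose_two_succ (e + 1), pow_add]
    ring
  · exact corankProb_succ_succ_of_add_two_le h

theorem sum_range_succ_eq_of_tridiagonal {u s d f g : ℕ → ℝ} {n : ℕ}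
    (hstoch : ∀ e, u e + s e + d e = 1) (hd : d 0 = 0) (hf : ∀ e, n ≤ e → f e = 0)
    (h0 : g 0 = s 0 * f 0 + d 1 * f 1)
    (hsucc : ∀ e < n, g (e + 1) = u e * f e + s (e + 1) * f (e + 1) + d (e + 2) * f (e + 2)) :
    ∑ e ∈ range (n + 1), g e = ∑ e ∈ range n, f e := by
  have shift (h : ℕ → ℝ) (hn : h n = 0) :
      ∑ e ∈ range n, h (e + 1) = ∑ e ∈ range n, h e - h 0 := by
    have := sum_range_succ' h n
    rw [sum_range_succ, hn, add_zero] at this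
    linarith
  have hs := shift (fun e => s e * f e) (by simp [hf n le_rfl])
  have hd₀ := shift (fun e => d e * f e) (by simp [hf n le_rfl])
  have hd₁ := shift (fun e => d (e + 1) * f (e + 1)) (by simp [hf (n + 1) (by omega)])
  have hsum : ∑ e ∈ range n, f e = ∑ e ∈ range n, (u e * f e + s e * f e + d e * f e) :=
    sum_congr rfl fun e _ => by rw [← add_mul, ← add_mul, hstoch, one_mul]
  rw [sum_range_succ', sum_congr rfl fun e he => hsucc e (mem_range.1 he), h0, hsum]
  simp only [sum_add_distrib] at hs hd₀ hd₁ ⊢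
  rw [hd, zero_mul] at hd₀
  linarith

theorem sum_corankProb {k : ℕ} (hk : 1 ≤ k) : ∑ e ∈ range k, corankProb k e = 1 := by
  induction k, hk using Nat.le_induction with
  | base => simp [corankProb_add_one_self 0]
  | succ k hk ih =>
    rw [← ih]
    refine sum_range_succ_eq_of_tridiagonal (u := fun e => (1/2) ^ (e + 1))
      (s := fun e => (1/2) ^ (e + 1)) (d := fun e => 1 - (1/2) ^ e) (fun e => by ring) (by simp)
      (fun e he => corankProb_eq_zero_of_le hk he) ?_ fun e he => corankProb_succ_succ he
    rw [corankProb_succ_zero hk]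
    norm_num

/-- The probabilities q(k,e), 0 ≤ e ≤ k-1, that a random undirected graph
on k vertices has exactly 2^{e+1} even partitions, sum to 1. -/
theorem q_sums_to_one (k : ℕ) (hk : 1 ≤ k) (q : ℕ → ℕ → ℝ)
    (hq : ∀ K E, q K E = (2:ℝ) ^ ((((K - E).choose 2 : ℤ)) - ((K.choose 2 : ℤ))) *
      (∏ i ∈ Finset.range E, (((2:ℝ) ^ (K - 1) - 2 ^ i) / ((2:ℝ) ^ E - 2 ^ i))) *
      ∏ j ∈ Finset.Icc 1 ((K - E) / 2), (1 - (1/2 : ℝ) ^ (2 * j - 1))) :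
    ∑ e ∈ Finset.range k, q k e = 1 := by
  rw [show q k = corankProb k from funext (hq k)]
  exact sum_corankProb hk
end
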